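/- arXiv:2508.03261 — 3 statements merged into one kernel-verified Lean document; each statement's English description precedes it below -/
import Mathlib

section
/- For an [n,k] stabilizer code with perfect error-correcting channel Λ(ρ) = Σ_m P_m Π_m ρ Π_m P_m, the eigenspectrum of Λ (as a linear map on 2^n × 2^n matrices) consists of 0 and 1, with multiplicities 4^n − 4^k and 4^k respectively. -/
/-!
Conjugation by the recovery operator `P_m` flips the signs of the stabilizers anticommuting with
it, so `P_m Π_0 P_m = Π_m` and the Kraus operators of `Λ` are `Π_0 P_m` and `P_m Π_0`. Distinct
syndromes give orthogonal projectors, hence `Π_0 P_m Π_0 = δ_{m0} Π_0` and `Λ` is idempotent.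
The characteristic polynomial of an idempotent is `X^(d - r) (X - 1)^r` with `r = tr Λ`, and
`tr Λ = ∑_m tr (Π_0 P_m) tr (P_m Π_0) = (tr Π_0)^2`. Finally the `2^(n-k)` projectors `Π_m` are
conjugate to each other and sum to `1`, so `tr Π_0 = 2^k`. Identities between the `Π_m` are
computed in the commutative algebra generated by the stabilizers.
-/

open Matrix

/-- Abstract data of an `[n,k]` stabilizer code: commuting Hermitian involutions
`S j` (the stabilizer generators), Hermitian Pauli recovery operators `P m` with
`P 0 = 1` and pairwise-distinct syndromes `ν m`, satisfying the commutation relations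
`P m * S j = (-1)^(ν m j) • (S j * P m)`. -/
structure StabCode (n k : ℕ) where
  S : Fin (n - k) → Matrix (Fin (2 ^ n)) (Fin (2 ^ n)) ℂ
  S_herm : ∀ j, (S j).IsHermitian
  S_invol : ∀ j, S j * S j = 1
  S_comm : ∀ j j', S j * S j' = S j' * S j
  ν : Fin (2 ^ (n - k)) → Fin (n - k) → Bool
  ν_inj : Function.Injective ν
  ν_zero : ∀ j, ν 0 j = false
  P : Fin (2 ^ (n - k)) → Matrix (Fin (2 ^ n)) (Fin (2 ^ n)) ℂ
  P_herm : ∀ m, (P m).IsHermitian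
  P_invol : ∀ m, P m * P m = 1
  P_zero : P 0 = 1
  P_S_comm : ∀ m j, P m * S j = (if ν m j then (-1 : ℂ) else 1) • (S j * P m)

namespace StabCode

variable {n k : ℕ}

/-- The sign `(-1)^(ν m j)`. -/
def sign (C : StabCode n k) (m : Fin (2 ^ (n - k))) (j : Fin (n - k)) : ℂ :=
  if C.ν m j then -1 else 1

/-- The projector `Π_m = ∏_j (1 + (-1)^(ν m j) • S j) / 2` onto the simultaneous
eigenspace of the stabilizer generators with signs `(-1)^(ν m j)`. -/
noncomputable def Proj (C : StabCode n k) (m : Fin (2 ^ (n - k))) :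
    Matrix (Fin (2 ^ n)) (Fin (2 ^ n)) ℂ :=
  ((2 : ℂ) ^ (n - k))⁻¹ •
    Finset.univ.noncommProd
      (fun j => (1 : Matrix (Fin (2 ^ n)) (Fin (2 ^ n)) ℂ) + C.sign m j • C.S j)
      (by
        intro a _ b _ _
        simp only [Function.onFun]
        have hc : Commute (C.S a) (C.S b) := C.S_comm a b
        have h1 : Commute (C.sign m a • C.S a) (C.sign m b • C.S b) :=
          (hc.smul_left _).smul_right _
        exact Commute.add_left (Commute.one_left _)
          (Commute.add_right (Commute.one_right _) h1))

/-- The error-correcting channel `Λ(ρ) = Σ_m P_m Π_m ρ Π_m P_m`, as a linear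
endomorphism of the matrix space. -/
noncomputable def chan (C : StabCode n k) :
    Matrix (Fin (2 ^ n)) (Fin (2 ^ n)) ℂ →ₗ[ℂ] Matrix (Fin (2 ^ n)) (Fin (2 ^ n)) ℂ where
  toFun ρ := ∑ m, C.P m * C.Proj m * ρ * (C.Proj m * C.P m)
  map_add' x y := by simp [mul_add, add_mul, Finset.sum_add_distrib]
  map_smul' c x := by simp [Finset.smul_sum, Matrix.mul_smul, Matrix.smul_mul]

end StabCode

section SignProjections

variable {K R ι : Type*} [Field K] [CommRing R] [Algebra K R] [Fintype ι]

def signedFactor (β : Bool) (x : R) : R := if β then 1 - x else 1 + x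

lemma signedFactor_mul_signedFactor {x : R} (hx : x * x = 1) (β γ : Bool) :
    signedFactor β x * signedFactor γ x = if β = γ then 2 * signedFactor β x else 0 := by
  cases β <;> cases γ <;> simp only [signedFactor, if_true, if_false, Bool.false_eq_true,
    reduceCtorEq]
  exacts [by linear_combination hx, by linear_combination -hx, by linear_combination -hx,
    by linear_combination hx]

variable (K) in
def signProj (s : ι → R) (b : ι → Bool) : R :=
  ((2 : K) ^ Fintype.card ι)⁻¹ • ∏ j, signedFactor (b j) (s j)

variable [NeZero (2 : K)]

lemma signProj_mul_signProj {s : ι → R} (hs : ∀ j, s j * s j = 1) (b b' : ι → Bool) :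
    signProj K s b * signProj K s b' = if b = b' then signProj K s b else 0 := by
  rw [signProj, signProj, smul_mul_smul_comm, ← Finset.prod_mul_distrib]
  simp only [signedFactor_mul_signedFactor (hs _), Finset.prod_ite_zero, Finset.mem_univ,
    forall_const, ← funext_iff, Finset.prod_mul_distrib, Finset.prod_const, Finset.card_univ]
  split_ifs
  · rw [← map_ofNat (algebraMap K R), ← map_pow, ← Algebra.smul_def, smul_smul]
    congr 1
    field_simp
  · rw [smul_zero]

lemma sum_signProj [DecidableEq ι] (s : ι → R) : ∑ b, signProj K s b = 1 := by
  unfold signProj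
  rw [← Finset.smul_sum, ← Fintype.prod_sum fun j β => signedFactor β (s j)]
  simp only [Fintype.sum_bool, signedFactor, if_true, Bool.false_eq_true, if_false,
    sub_add_add_cancel, one_add_one_eq_two, Finset.prod_const, Finset.card_univ]
  rw [← map_ofNat (algebraMap K R), ← map_pow, Algebra.smul_def, ← map_mul,
    inv_mul_cancel₀ (pow_ne_zero _ two_ne_zero), map_one]

end SignProjections

theorem SemiconjBy.map_prod {ι M N : Type*} [CommMonoid M] [Monoid N] (φ : M →* N) {p : N}
    {s : Finset ι} {f g : ι → M} (h : ∀ i ∈ s, SemiconjBy p (φ (f i)) (φ (g i))) :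
    SemiconjBy p (φ (∏ i ∈ s, f i)) (φ (∏ i ∈ s, g i)) := by
  have := Finset.prod_induction (fun i => (f i, g i)) (fun q => SemiconjBy p (φ q.1) (φ q.2))
    (fun a b ha hb => by simpa using ha.mul_right hb) (by simp) h
  simpa [Prod.fst_prod, Prod.snd_prod] using this

open Module Polynomial in
theorem LinearMap.charpoly_of_isIdempotentElem {K V : Type*} [Field K] [AddCommGroup V]
    [Module K V] [FiniteDimensional K V] {f : V →ₗ[K] V} (hf : IsIdempotentElem f) :
    f.charpoly = X ^ (finrank K V - finrank K (range f)) * (X - 1) ^ finrank K (range f) := by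
  conv_lhs => rw [(IsIdempotentElem.isProj_range f hf).eq_conj_prodMap]
  rw [LinearEquiv.charpoly_conj, charpoly_prodMap, ← End.one_eq_id, charpoly_one, charpoly_zero,
    mul_comm, ← finrank_range_add_finrank_ker f, Nat.add_sub_cancel_left]

theorem Matrix.trace_mulLeftRight {R n : Type*} [CommRing R] [Fintype n] [DecidableEq n]
    (A B : Matrix n n R) :
    LinearMap.trace R _ (LinearMap.mulLeftRight R (A, B)) = A.trace * B.trace := by
  rw [LinearMap.trace_eq_matrix_trace R (Matrix.stdBasis R n n), Matrix.trace,
    Fintype.sum_prod_type, Matrix.trace, Matrix.trace, Finset.sum_mul_sum]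
  refine Finset.sum_congr rfl fun i _ => Finset.sum_congr rfl fun j _ => ?_
  rw [Matrix.diag_apply, Matrix.diag_apply, Matrix.diag_apply, LinearMap.toMatrix_apply,
    Matrix.stdBasis_eq_single, LinearMap.mulLeftRight_apply]
  show (A * Matrix.single i j (1 : R) * B : Matrix n n R) i j = _
  simp [Matrix.mul_apply, Matrix.single_apply, ite_and]

namespace StabCode
open scoped IsMulCommutative
variable {n k : ℕ} (C : StabCode n k)

abbrev stabilizerAlgebra : Subalgebra ℂ (Matrix (Fin (2 ^ n)) (Fin (2 ^ n)) ℂ) :=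
  Algebra.adjoin ℂ (Set.range C.S)

instance : IsMulCommutative C.stabilizerAlgebra :=
  Algebra.isMulCommutative_adjoin ℂ (by rintro _ ⟨i, rfl⟩ _ ⟨j, rfl⟩; exact C.S_comm i j)

def gen (j : Fin (n - k)) : C.stabilizerAlgebra := ⟨C.S j, Algebra.subset_adjoin ⟨j, rfl⟩⟩

lemma gen_mul_self (j : Fin (n - k)) : C.gen j * C.gen j = 1 := Subtype.ext (C.S_invol j)

lemma coe_signedFactor_gen (m : Fin (2 ^ (n - k))) (j : Fin (n - k)) :
    (↑(signedFactor (C.ν m j) (C.gen j)) : Matrix (Fin (2 ^ n)) (Fin (2 ^ n)) ℂ) =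
      1 + C.sign m j • C.S j := by
  simp only [signedFactor, sign]
  split_ifs <;> simp [gen, sub_eq_add_neg]

lemma Proj_eq_signProj (m : Fin (2 ^ (n - k))) :
    C.Proj m = ↑(signProj ℂ C.gen (C.ν m)) := by
  rw [Proj, signProj, Subalgebra.coe_smul, Fintype.card_fin, ← Finset.noncommProd_eq_prod]
  congr 1
  refine Eq.trans ?_ (Finset.map_noncommProd _ _ _ C.stabilizerAlgebra.val).symm
  exact Finset.noncommProd_congr rfl (fun j _ => (C.coe_signedFactor_gen m j).symm) _

lemma Proj_mul_Proj (m m' : Fin (2 ^ (n - k))) :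
    C.Proj m * C.Proj m' = if m = m' then C.Proj m else 0 := by
  simp only [Proj_eq_signProj, ← Subalgebra.coe_mul, signProj_mul_signProj C.gen_mul_self,
    C.ν_inj.eq_iff]
  split_ifs <;> rfl

lemma sum_Proj : ∑ m, C.Proj m = 1 := by
  have hν : Function.Bijective C.ν :=
    (Fintype.bijective_iff_injective_and_card _).2 ⟨C.ν_inj, by simp⟩
  simp only [Proj_eq_signProj, ← AddSubmonoidClass.coe_finsetSum,
    hν.sum_comp (signProj ℂ C.gen), sum_signProj, OneMemClass.coe_one]

lemma semiconjBy_P_signedFactor (m : Fin (2 ^ (n - k))) (j : Fin (n - k)) :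
    SemiconjBy (C.P m) ↑(signedFactor false (C.gen j))
      ↑(signedFactor (C.ν m j) (C.gen j)) := by
  have h := C.P_S_comm m j
  cases hν : C.ν m j <;> simp only [hν] at h <;>
    simp [SemiconjBy, signedFactor, gen, mul_add, add_mul, sub_eq_add_neg, h]

lemma P_mul_Proj_zero (m : Fin (2 ^ (n - k))) :
    C.P m * C.Proj 0 = C.Proj m * C.P m := by
  have h := SemiconjBy.map_prod C.stabilizerAlgebra.val.toMonoidHom (s := Finset.univ)
    (f := fun j => signedFactor false (C.gen j)) (g := fun j => signedFactor (C.ν m j) (C.gen j))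
    fun j _ => C.semiconjBy_P_signedFactor m j
  rw [Proj_eq_signProj, Proj_eq_signProj, show C.ν 0 = fun _ => false from funext C.ν_zero]
  simp only [signProj, Subalgebra.coe_smul, mul_smul_comm, smul_mul_assoc]
  exact congrArg _ h.eq

lemma Proj_zero_mul_P (m : Fin (2 ^ (n - k))) :
    C.Proj 0 * C.P m = C.P m * C.Proj m :=
  calc C.Proj 0 * C.P m = C.P m * (C.P m * C.Proj 0) * C.P m := by
        rw [← mul_assoc, C.P_invol, one_mul]
    _ = C.P m * C.Proj m := by rw [P_mul_Proj_zero, mul_assoc, mul_assoc, C.P_invol, mul_one]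

-- The Knill–Laflamme condition for the error set `{P m}`.
lemma Proj_zero_mul_P_mul_Proj_zero (m : Fin (2 ^ (n - k))) :
    C.Proj 0 * C.P m * C.Proj 0 = if m = 0 then C.Proj 0 else 0 := by
  rw [Proj_zero_mul_P, mul_assoc, Proj_mul_Proj]
  split_ifs with h
  · rw [h, P_zero, one_mul]
  · rw [mul_zero]

lemma trace_Proj_zero (hk : k ≤ n) : (C.Proj 0).trace = 2 ^ k := by
  have h : ∀ m, (C.Proj m).trace = (C.Proj 0).trace := fun m => by
    rw [← mul_one (C.Proj m), ← C.P_invol m, ← mul_assoc, ← P_mul_Proj_zero,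
      Matrix.trace_mul_cycle, C.P_invol, one_mul]
  have hsum : (2 : ℂ) ^ (n - k) * (C.Proj 0).trace = 2 ^ (n - k) * 2 ^ k := by
    calc (2 : ℂ) ^ (n - k) * (C.Proj 0).trace = (∑ m, C.Proj m).trace := by
          simp [Matrix.trace_sum, h]
      _ = 2 ^ (n - k) * 2 ^ k := by
          rw [sum_Proj, Matrix.trace_one, ← pow_add, Nat.sub_add_cancel hk]; simp
  exact mul_left_cancel₀ (pow_ne_zero _ two_ne_zero) hsum

lemma chan_eq_sum : C.chan =
    ∑ m, LinearMap.mulLeftRight ℂ (C.Proj 0 * C.P m, C.P m * C.Proj 0) := by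
  ext ρ : 1
  simp [chan, LinearMap.mulLeftRight_apply, Proj_zero_mul_P, P_mul_Proj_zero]

lemma chan_apply (ρ : Matrix (Fin (2 ^ n)) (Fin (2 ^ n)) ℂ) :
    C.chan ρ = C.Proj 0 * (∑ m, C.P m * ρ * C.P m) * C.Proj 0 := by
  simp [chan_eq_sum, LinearMap.mulLeftRight_apply, Finset.mul_sum, Finset.sum_mul, mul_assoc]

lemma isIdempotentElem_chan : IsIdempotentElem C.chan := by
  ext ρ : 1
  show C.chan (C.chan ρ) = C.chan ρ
  rw [C.chan_apply (C.chan ρ), C.chan_apply ρ]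
  generalize ∑ m, C.P m * ρ * C.P m = X
  calc C.Proj 0 * (∑ m, C.P m * (C.Proj 0 * X * C.Proj 0) * C.P m) * C.Proj 0
      = ∑ m, (C.Proj 0 * C.P m * C.Proj 0) * X * (C.Proj 0 * C.P m * C.Proj 0) := by
        rw [Finset.mul_sum, Finset.sum_mul]
        simp only [mul_assoc]
    _ = C.Proj 0 * X * C.Proj 0 := by simp [Proj_zero_mul_P_mul_Proj_zero]

lemma trace_Proj_zero_mul_P (hk : k ≤ n) (m : Fin (2 ^ (n - k))) :
    (C.Proj 0 * C.P m).trace = if m = 0 then 2 ^ k else 0 :=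
  calc (C.Proj 0 * C.P m).trace = (C.Proj 0 * C.P m * C.Proj 0).trace := by
        rw [Matrix.trace_mul_cycle, Proj_mul_Proj, if_pos rfl]
    _ = if m = 0 then 2 ^ k else 0 := by
        rw [Proj_zero_mul_P_mul_Proj_zero, apply_ite Matrix.trace, C.trace_Proj_zero hk,
          Matrix.trace_zero]

lemma trace_chan (hk : k ≤ n) : LinearMap.trace ℂ _ C.chan = 4 ^ k := by
  simp [chan_eq_sum, Matrix.trace_mulLeftRight, Matrix.trace_mul_comm (C.P _),
    C.trace_Proj_zero_mul_P hk, ← mul_pow]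
  norm_num

end StabCode

open Polynomial in
/-- The eigenspectrum of the perfect error-correcting channel `Λ` of an `[n,k]`
stabilizer code, viewed as a linear endomorphism of the `4^n`-dimensional matrix
space, consists of `0` and `1` with (algebraic) multiplicities `4^n - 4^k` and `4^k`
respectively; equivalently, its characteristic polynomial is
`X^(4^n - 4^k) * (X - 1)^(4^k)`. -/
theorem stabilizer_channel_eigenvalues {n k : ℕ} (hk : k ≤ n) (C : StabCode n k) :
    LinearMap.charpoly C.chan = X ^ (4 ^ n - 4 ^ k) * (X - 1) ^ (4 ^ k) := by
  have hrank : Module.finrank ℂ (LinearMap.range C.chan) = 4 ^ k := by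
    have h := (LinearMap.IsIdempotentElem.isProj_range _ C.isIdempotentElem_chan).trace
    rw [C.trace_chan hk] at h
    exact_mod_cast h.symm
  rw [LinearMap.charpoly_of_isIdempotentElem C.isIdempotentElem_chan, hrank,
    Module.finrank_matrix]
  simp [← mul_pow]
end

section
/- With Δ̄(ρ) = 2^{−(n−k)} Σ_{m₁,m₂} P_{m₁}Π₁P_{m₂} ρ P_{m₂}Π₁P_{m₁} as above, Δ̄ is idempotent: Δ̄∘Δ̄ = Δ̄. Consequently the eigenvalues of Δ̄ lie in {0,1}, and the eigenvalues of Δ = Λ†Λ lie in {0, 2^{n−k}}. -/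
open Matrix

namespace StabCode

/-- The map `Δ(ρ) = Σ_{m₁,m₂} P_{m₁} Π₁ P_{m₂} ρ P_{m₂} Π₁ P_{m₁}`, i.e. `Λ† ∘ Λ` for
the perfect error-correcting channel `Λ` (adjoint in the Hilbert–Schmidt inner
product). -/
noncomputable def Dmap {n k : ℕ} (C : StabCode n k) :
    Matrix (Fin (2 ^ n)) (Fin (2 ^ n)) ℂ →ₗ[ℂ] Matrix (Fin (2 ^ n)) (Fin (2 ^ n)) ℂ where
  toFun ρ := ∑ m₁, ∑ m₂, (C.P m₁ * C.Proj 0 * C.P m₂) * ρ * (C.P m₂ * C.Proj 0 * C.P m₁)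
  map_add' x y := by simp [mul_add, add_mul, Finset.sum_add_distrib]
  map_smul' c x := by simp [Finset.smul_sum, Matrix.mul_smul, Matrix.smul_mul]

/-- The rescaled map `Δ̄ = 2^{-(n-k)} Δ`. -/
noncomputable def Dbar {n k : ℕ} (C : StabCode n k) :
    Matrix (Fin (2 ^ n)) (Fin (2 ^ n)) ℂ →ₗ[ℂ] Matrix (Fin (2 ^ n)) (Fin (2 ^ n)) ℂ :=
  ((2 : ℂ) ^ (n - k))⁻¹ • C.Dmap

end StabCode

/-!
`Π₀` absorbs every stabilizer generator, `S j * Π₀ = Π₀ = Π₀ * S j`, hence is idempotent.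
For `a ≠ b` the syndromes differ at some `j`, so `P a * P b` anticommutes with `S j`, and
`Π₀ (P a P b) Π₀ = Π₀ S j (P a P b) Π₀ = -Π₀ (P a P b) S j Π₀` vanishes. Thus
`E a b = P a Π₀ P b` multiply like matrix units, `E a b * E c d = δ_{bc} E a d`, and composing
`ρ ↦ Σ_{a,b} E a b ρ E b a` with itself multiplies it by the number `2^(n-k)` of syndromes.
-/

namespace Finset

variable {ι M : Type*} [Monoid M] {s : Finset ι} {f : ι → M}

theorem mul_noncommProd_of_mul_eq (comm) {x : M} {i : ι} (hi : i ∈ s) (h : x * f i = f i) :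
    x * s.noncommProd f comm = s.noncommProd f comm := by
  classical
  rw [← mul_noncommProd_erase s hi f comm, ← mul_assoc, h]

theorem noncommProd_mul_of_mul_eq (comm) {x : M} {i : ι} (hi : i ∈ s) (h : f i * x = f i) :
    s.noncommProd f comm * x = s.noncommProd f comm := by
  classical
  rw [← noncommProd_erase_mul s hi f comm, mul_assoc, h]

theorem mul_noncommProd_of_mul_eq_smul {K : Type*} [CommMonoid K] [MulAction K M]
    [IsScalarTower K M M] (comm) {a : M} {c : K} (h : ∀ i ∈ s, a * f i = c • a) :
    a * s.noncommProd f comm = c ^ s.card • a := by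
  classical
  induction s using Finset.induction_on with
  | empty => simp
  | @insert i s hi ih =>
    rw [noncommProd_insert_of_notMem _ _ _ _ hi, ← mul_assoc, h i (mem_insert_self i s),
      smul_mul_assoc, ih (comm.mono (by simp)) (fun j hj => h j (mem_insert_of_mem hj)),
      smul_smul, card_insert_of_notMem hi, pow_succ']

end Finset

theorem mul_mul_eq_zero_of_mul_eq_neg {R : Type*} [Ring R] [IsAddTorsionFree R] {p x y : R}
    (hpx : p * x = p) (hxp : x * p = p) (hyx : y * x = -(x * y)) : p * y * p = 0 :=
  self_eq_neg.mp <| calc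
    p * y * p = p * (x * y) * p := by rw [← mul_assoc, hpx]
    _ = -(p * (y * x) * p) := by rw [hyx]; noncomm_ring
    _ = -(p * y * p) := by rw [← mul_assoc p y x, mul_assoc _ x p, hxp]

section Sandwich

variable {ι R : Type*} [Fintype ι] [Semiring R]

def sandwichSum (E : ι → ι → R) (ρ : R) : R :=
  ∑ a, ∑ b, E a b * ρ * E b a

theorem sandwichSum_sandwichSum [DecidableEq ι] (E : ι → ι → R)
    (hE : ∀ a b c d, E a b * E c d = if b = c then E a d else 0) (ρ : R) :
    sandwichSum E (sandwichSum E ρ) = Fintype.card ι • sandwichSum E ρ := by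
  have hterm : ∀ a b c d, E a b * (E c d * ρ * E d c) * E b a
      = if b = c then E a d * ρ * E d a else 0 := by
    intro a b c d
    rw [show E a b * (E c d * ρ * E d c) * E b a = E a b * E c d * ρ * (E d c * E b a) by
      simp only [mul_assoc], hE, hE]
    split_ifs with hbc hcb hcb <;> simp_all
  simp only [sandwichSum, Finset.mul_sum, Finset.sum_mul, hterm]
  rw [Finset.smul_sum]
  refine Finset.sum_congr rfl fun a _ => ?_
  rw [← Finset.card_univ, ← Finset.sum_const]
  refine Finset.sum_congr rfl fun b _ => ?_
  rw [Finset.sum_comm]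
  simp

end Sandwich

namespace StabCode

variable {n k : ℕ} (C : StabCode n k)

theorem sign_zero (j : Fin (n - k)) : C.sign 0 j = 1 := by
  simp [sign, C.ν_zero]

theorem sign_mul_sign_of_ne {a b : Fin (2 ^ (n - k))} {j : Fin (n - k)}
    (h : C.ν a j ≠ C.ν b j) : C.sign a j * C.sign b j = -1 := by
  unfold sign
  cases ha : C.ν a j <;> cases hb : C.ν b j <;> simp_all

theorem P_mul_P_mul_S (a b : Fin (2 ^ (n - k))) (j : Fin (n - k)) :
    C.P a * C.P b * C.S j = (C.sign a j * C.sign b j) • (C.S j * (C.P a * C.P b)) := by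
  have hPS : ∀ m, C.P m * C.S j = C.sign m j • (C.S j * C.P m) := fun m => C.P_S_comm m j
  rw [mul_assoc, hPS, mul_smul_comm, ← mul_assoc, hPS, smul_mul_assoc, smul_smul, mul_comm,
    mul_assoc]

theorem S_mul_Proj_zero (j : Fin (n - k)) : C.S j * C.Proj 0 = C.Proj 0 := by
  rw [Proj, mul_smul_comm]
  congr 1
  refine Finset.mul_noncommProd_of_mul_eq _ (Finset.mem_univ j) ?_
  rw [sign_zero, one_smul, mul_add, mul_one, C.S_invol, add_comm]

theorem Proj_zero_mul_S (j : Fin (n - k)) : C.Proj 0 * C.S j = C.Proj 0 := by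
  rw [Proj, smul_mul_assoc]
  congr 1
  refine Finset.noncommProd_mul_of_mul_eq _ (Finset.mem_univ j) ?_
  rw [sign_zero, one_smul, add_mul, one_mul, C.S_invol, add_comm]

theorem Proj_zero_mul_self : C.Proj 0 * C.Proj 0 = C.Proj 0 := by
  have h2 : (2 : ℂ) ^ (n - k) ≠ 0 := pow_ne_zero _ two_ne_zero
  have hfactor : ∀ j ∈ Finset.univ, C.Proj 0 * (1 + C.sign 0 j • C.S j) = (2 : ℂ) • C.Proj 0 := by
    intro j _
    rw [sign_zero, one_smul, mul_add, mul_one, Proj_zero_mul_S, two_smul]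
  nth_rw 2 [Proj]
  rw [mul_smul_comm]
  refine (congrArg _ (Finset.mul_noncommProd_of_mul_eq_smul _ hfactor)).trans ?_
  rw [smul_smul, Finset.card_univ, Fintype.card_fin, inv_mul_cancel₀ h2, one_smul]

theorem Proj_zero_mul_P_mul_P_mul_Proj_zero (a b : Fin (2 ^ (n - k))) :
    C.Proj 0 * (C.P a * C.P b) * C.Proj 0 = if a = b then C.Proj 0 else 0 := by
  split_ifs with hab
  · rw [hab, C.P_invol, mul_one, Proj_zero_mul_self]
  obtain ⟨j, hj⟩ := Function.ne_iff.mp (C.ν_inj.ne hab)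
  have : IsAddTorsionFree (Matrix (Fin (2 ^ n)) (Fin (2 ^ n)) ℂ) :=
    inferInstanceAs (IsAddTorsionFree (Fin (2 ^ n) → Fin (2 ^ n) → ℂ))
  refine mul_mul_eq_zero_of_mul_eq_neg (C.Proj_zero_mul_S j) (C.S_mul_Proj_zero j) ?_
  rw [P_mul_P_mul_S, sign_mul_sign_of_ne _ hj, neg_one_smul]

theorem Dmap_apply (ρ : Matrix (Fin (2 ^ n)) (Fin (2 ^ n)) ℂ) :
    C.Dmap ρ = sandwichSum (fun a b => C.P a * C.Proj 0 * C.P b) ρ :=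
  rfl

theorem Dmap_comp_Dmap : C.Dmap ∘ₗ C.Dmap = (2 : ℂ) ^ (n - k) • C.Dmap := by
  ext1 ρ
  have hunits : ∀ a b c d : Fin (2 ^ (n - k)),
      C.P a * C.Proj 0 * C.P b * (C.P c * C.Proj 0 * C.P d)
        = if b = c then C.P a * C.Proj 0 * C.P d else 0 := by
    intro a b c d
    rw [show C.P a * C.Proj 0 * C.P b * (C.P c * C.Proj 0 * C.P d)
        = C.P a * (C.Proj 0 * (C.P b * C.P c) * C.Proj 0) * C.P d by simp only [mul_assoc],
      Proj_zero_mul_P_mul_P_mul_Proj_zero]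
    split_ifs <;> simp
  rw [LinearMap.comp_apply, LinearMap.smul_apply, Dmap_apply, Dmap_apply]
  simpa only [Fintype.card_fin, ← Nat.cast_smul_eq_nsmul ℂ, Nat.cast_pow, Nat.cast_ofNat]
    using sandwichSum_sandwichSum _ hunits ρ

theorem isIdempotentElem_Dbar : IsIdempotentElem (C.Dbar : Module.End ℂ _) := by
  have h2 : (2 : ℂ) ^ (n - k) ≠ 0 := pow_ne_zero _ two_ne_zero
  rw [IsIdempotentElem, Module.End.mul_eq_comp, Dbar, LinearMap.smul_comp, LinearMap.comp_smul,
    Dmap_comp_Dmap, smul_smul, smul_smul, inv_mul_cancel_right₀ h2]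

theorem Dmap_eq_smul_Dbar : C.Dmap = (2 : ℂ) ^ (n - k) • C.Dbar := by
  rw [Dbar, smul_smul, mul_inv_cancel₀ (pow_ne_zero _ two_ne_zero), one_smul]

end StabCode

theorem stabilizer_Dbar_idempotent_general {n k : ℕ} (C : StabCode n k) :
    C.Dbar ∘ₗ C.Dbar = C.Dbar ∧
      (∀ μ ∈ spectrum ℂ (C.Dbar : Module.End ℂ (Matrix (Fin (2 ^ n)) (Fin (2 ^ n)) ℂ)),
        μ = 0 ∨ μ = 1) ∧
      (∀ μ ∈ spectrum ℂ (C.Dmap : Module.End ℂ (Matrix (Fin (2 ^ n)) (Fin (2 ^ n)) ℂ)),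
        μ = 0 ∨ μ = (2 : ℂ) ^ (n - k)) := by
  have hidem := C.isIdempotentElem_Dbar
  have hspec := hidem.spectrum_subset ℂ
  refine ⟨hidem, fun μ hμ => hspec hμ, fun μ hμ => ?_⟩
  have h2 : (2 : ℂ) ^ (n - k) ≠ 0 := pow_ne_zero _ two_ne_zero
  rw [C.Dmap_eq_smul_Dbar, ← Units.val_mk0 h2, ← Units.smul_def,
    spectrum.unit_smul_eq_smul] at hμ
  obtain ⟨ν, hν, rfl⟩ := hμ
  rcases hspec hν with rfl | rfl <;> simp

/-- `Δ̄` is idempotent, `Δ̄ ∘ Δ̄ = Δ̄`; consequently its eigenvalues lie in `{0, 1}`,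
and the eigenvalues of `Δ = Λ† Λ` lie in `{0, 2^(n-k)}`. -/
theorem stabilizer_Dbar_idempotent {n k : ℕ} (hk : k ≤ n) (C : StabCode n k) :
    C.Dbar ∘ₗ C.Dbar = C.Dbar ∧
      (∀ μ ∈ spectrum ℂ (C.Dbar : Module.End ℂ (Matrix (Fin (2 ^ n)) (Fin (2 ^ n)) ℂ)),
        μ = 0 ∨ μ = 1) ∧
      (∀ μ ∈ spectrum ℂ (C.Dmap : Module.End ℂ (Matrix (Fin (2 ^ n)) (Fin (2 ^ n)) ℂ)),
        μ = 0 ∨ μ = (2 : ℂ) ^ (n - k)) :=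
  stabilizer_Dbar_idempotent_general C
end

section
/- Let Λ be the perfect error-correcting channel of the three-qubit bit-flip code with stabilizer generators S₁ = I⊗Z⊗Z and S₂ = Z⊗Z⊗I and recovery Paulis {I, X⊗I⊗I, I⊗X⊗I, I⊗I⊗X}. Then the superoperator of Λ has singular values 2 with multiplicity 4 and 0 with multiplicity 60. -/
open Matrix Kronecker

/-- The multiset of singular values of a complex matrix `A`, counted with multiplicity:
the nonnegative square roots of the eigenvalues of `Aᴴ * A`. -/
noncomputable def singularValues {n : Type*} [Fintype n] [DecidableEq n]
    (A : Matrix n n ℂ) : Multiset ℝ :=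
  ((Aᴴ * A).charpoly.roots).map fun z => Real.sqrt z.re

/-- Pauli `X`. -/
def pX : Matrix (Fin 2) (Fin 2) ℂ := !![0, 1; 1, 0]

/-- Pauli `Z`. -/
def pZ : Matrix (Fin 2) (Fin 2) ℂ := !![1, 0; 0, -1]

/-- First stabilizer generator `S₁ = I ⊗ Z ⊗ Z` of the three-qubit bit-flip code. -/
noncomputable def S₁ : Matrix (Fin 2 × Fin 2 × Fin 2) (Fin 2 × Fin 2 × Fin 2) ℂ :=
  (1 : Matrix (Fin 2) (Fin 2) ℂ) ⊗ₖ (pZ ⊗ₖ pZ)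

/-- Second stabilizer generator `S₂ = Z ⊗ Z ⊗ I`. -/
noncomputable def S₂ : Matrix (Fin 2 × Fin 2 × Fin 2) (Fin 2 × Fin 2 × Fin 2) ℂ :=
  pZ ⊗ₖ (pZ ⊗ₖ (1 : Matrix (Fin 2) (Fin 2) ℂ))

/-- The recovery Paulis `{I, X⊗I⊗I, I⊗X⊗I, I⊗I⊗X}`. -/
noncomputable def recP : Fin 4 → Matrix (Fin 2 × Fin 2 × Fin 2) (Fin 2 × Fin 2 × Fin 2) ℂ :=
  ![1,
    pX ⊗ₖ ((1 : Matrix (Fin 2) (Fin 2) ℂ) ⊗ₖ (1 : Matrix (Fin 2) (Fin 2) ℂ)),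
    (1 : Matrix (Fin 2) (Fin 2) ℂ) ⊗ₖ (pX ⊗ₖ (1 : Matrix (Fin 2) (Fin 2) ℂ)),
    (1 : Matrix (Fin 2) (Fin 2) ℂ) ⊗ₖ ((1 : Matrix (Fin 2) (Fin 2) ℂ) ⊗ₖ pX)]

/-- The signs `(-1)^{ν_m(j)}` of the syndromes of the recovery Paulis with respect to
`S₁, S₂`. -/
def sgn : Fin 4 → Fin 2 → ℂ :=
  ![![1, 1], ![1, -1], ![-1, -1], ![-1, 1]]

/-- The syndrome-subspace projectors `Π_m = (I + (−1)^{ν_m(1)}S₁)(I + (−1)^{ν_m(2)}S₂)/4`. -/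
noncomputable def Proj3 (m : Fin 4) :
    Matrix (Fin 2 × Fin 2 × Fin 2) (Fin 2 × Fin 2 × Fin 2) ℂ :=
  (4 : ℂ)⁻¹ • ((1 + sgn m 0 • S₁) * (1 + sgn m 1 • S₂))

/-- Kraus operators `A_m = P_m Π_m` of the bit-flip error-correcting channel
`Λ(ρ) = Σ_m P_m Π_m ρ Π_m P_m`. -/
noncomputable def kraus3 (m : Fin 4) :
    Matrix (Fin 2 × Fin 2 × Fin 2) (Fin 2 × Fin 2 × Fin 2) ℂ :=
  recP m * Proj3 m

/-!
The Kraus operators are `K_m = P_m Π_m = Π_0 P_m`, where `Π_m` projects onto the syndrome space of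
`P_m`. The four syndromes are distinct, so the `Π_m` are mutually orthogonal, which gives the
Knill–Laflamme relations `K_m K_pᴴ = δ_{mp} Π_0`. Hence the operators `D_{mp} = K_mᴴ K_p` multiply
like matrix units, and so do the summands `conj D_{mp} ⊗ D_{mp}` of the Gram matrix `G = Λᴴ Λ` of
the superoperator `Λ`. Summing over the four Kraus operators gives `G² = 4 G`, while
`tr G = 4 |tr Π_0|² = 16`. So every eigenvalue of `G` is `0` or `4`, and `4` occurs `16 / 4 = 4`
times among the `64` eigenvalues.
-/

theorem Multiset.eq_replicate_add_replicate_zero {K : Type*} [Field K] [CharZero K]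
    {s : Multiset K} {c : K} {k : ℕ} (hc : c ≠ 0) (hs : ∀ z ∈ s, z = 0 ∨ z = c)
    (hsum : s.sum = k * c) : s = replicate k c + replicate (card s - k) 0 := by
  classical
  have hzero : s.filter (· ≠ c) = replicate (card (s.filter (· ≠ c))) 0 :=
    eq_replicate_card.mpr fun z hz =>
      (hs z (mem_of_mem_filter hz)).resolve_right (mem_filter.mp hz).2
  have hsplit : s = replicate (count c s) c + replicate (card (s.filter (· ≠ c))) 0 := by
    rw [← filter_eq', ← hzero, filter_add_not]
  have hcount : count c s = k := by
    rw [hsplit, sum_add, sum_replicate, sum_replicate, smul_zero, add_zero, nsmul_eq_mul] at hsum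
    exact_mod_cast mul_right_cancel₀ hc hsum
  rw [hsplit, hcount, card_add, card_replicate, card_replicate, Nat.add_sub_cancel_left]

open Polynomial in
theorem spectrum.eq_zero_or_eq_of_mul_self_eq_smul {K A : Type*} [Field K] [Ring A]
    [Algebra K A] {a : A} {c : K} (ha : a * a = c • a) {z : K} (hz : z ∈ spectrum K a) :
    z = 0 ∨ z = c := by
  have hmap : eval z (X * X - C c * X) ∈ spectrum K (aeval a (X * X - C c * X)) :=
    spectrum.subset_polynomial_aeval a _ ⟨z, hz, rfl⟩
  have hvanish : aeval a (X * X - C c * X) = 0 := by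
    simp [ha, Algebra.smul_def]
  have heval : eval z (X * X - C c * X) = z * (z - c) := by
    simp only [eval_sub, eval_mul, eval_X, eval_C]
    ring
  rw [hvanish, heval, spectrum.mem_iff, sub_zero] at hmap
  have hroot : z * (z - c) = 0 := by
    by_contra hne
    exact hmap ((isUnit_iff_ne_zero.mpr hne).map (algebraMap K A))
  simpa [sub_eq_zero] using hroot

theorem Matrix.charpoly_roots_eq_of_mul_self_eq_smul {K n : Type*} [Field K] [IsAlgClosed K]
    [CharZero K] [Fintype n] [DecidableEq n] {G : Matrix n n K} {c : K} {k : ℕ} (hc : c ≠ 0)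
    (hG : G * G = c • G) (htr : G.trace = k * c) :
    G.charpoly.roots = Multiset.replicate k c + Multiset.replicate (Fintype.card n - k) 0 := by
  have hcard : Multiset.card G.charpoly.roots = Fintype.card n := by
    rw [(IsAlgClosed.splits G.charpoly).natDegree_eq_card_roots.symm, charpoly_natDegree_eq_dim]
  rw [← hcard]
  refine Multiset.eq_replicate_add_replicate_zero hc (fun z hz => ?_)
    (by rw [← trace_eq_sum_roots_charpoly, htr])
  exact spectrum.eq_zero_or_eq_of_mul_self_eq_smul hG
    (mem_spectrum_of_isRoot_charpoly (Polynomial.isRoot_of_mem_roots hz))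

theorem sum_sum_mul_self_of_mul_eq_ite {ι A : Type*} [Fintype ι] [DecidableEq ι]
    [NonUnitalNonAssocSemiring A] (E : ι → ι → A)
    (hE : ∀ i j k l, E i j * E k l = if j = k then E i l else 0) :
    (∑ i, ∑ j, E i j) * (∑ i, ∑ j, E i j) = Fintype.card ι • ∑ i, ∑ j, E i j := by
  simp only [Finset.mul_sum, Finset.sum_mul, hE, Finset.sum_ite_eq', Finset.mem_univ, if_true,
    Finset.sum_const, Finset.card_univ, Finset.smul_sum]
  exact Finset.sum_comm

theorem Commute.one_add_smul {K A : Type*} [CommSemiring K] [Semiring A] [Algebra K A]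
    {S T : A} (h : Commute S T) (a b : K) : Commute (1 + a • S) (1 + b • T) :=
  (Commute.one_left _).add_left <|
    ((Commute.one_right _).add_right (h.smul_right b)).smul_left a

theorem one_add_smul_mul_one_add_smul {K A : Type*} [Field K] [DecidableEq K] [Ring A]
    [Algebra K A] {S : A} (hS : S * S = 1) {a b : K} (ha : a * a = 1) (hb : b * b = 1) :
    (1 + a • S) * (1 + b • S) = if a = b then (2 : K) • (1 + a • S) else 0 := by
  have hexp : (1 + a • S) * (1 + b • S) = (1 + a * b) • (1 : A) + (a + b) • S := by
    simp only [mul_add, add_mul, one_mul, mul_one, smul_mul_smul_comm, hS, add_smul, one_smul,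
      mul_smul]
    abel
  rw [hexp]
  split_ifs with hab
  · subst hab
    rw [ha, smul_add, smul_smul, show (1 + 1 : K) = 2 by norm_num, two_mul]
  · have hba : b = -a := by
      have : (b - a) * (b + a) = 0 := by linear_combination hb - ha
      exact eq_neg_of_add_eq_zero_left
        ((mul_eq_zero.mp this).resolve_left (sub_ne_zero.mpr (Ne.symm hab)))
    rw [hba, mul_neg, ha, add_neg_cancel, add_neg_cancel, zero_smul, zero_smul, add_zero]

theorem mul_mul_mul_eq_of_mul_self_eq_one {A : Type*} [Monoid A] {P : A} (hP : P * P = 1)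
    (X Y : A) : P * (X * Y) * P = P * X * P * (P * Y * P) := by
  simp only [mul_assoc, ← mul_assoc P P, hP, one_mul]

theorem Matrix.neg_kronecker {l m n p α : Type*} [Ring α] (A : Matrix l m α)
    (B : Matrix n p α) : (-A) ⊗ₖ B = -(A ⊗ₖ B) := by
  ext; simp

theorem Matrix.kronecker_neg {l m n p α : Type*} [Ring α] (A : Matrix l m α)
    (B : Matrix n p α) : A ⊗ₖ (-B) = -(A ⊗ₖ B) := by
  ext; simp

section Superoperator

variable {R ι n : Type*} [CommRing R] [StarRing R] [Fintype n]

theorem Matrix.map_star_mul (A B : Matrix n n R) :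
    (A * B).map star = A.map star * B.map star :=
  Matrix.map_mul (f := starRingEnd R)

theorem Matrix.trace_map_star (A : Matrix n n R) : (A.map star).trace = star A.trace := by
  rw [← trace_conjTranspose]
  rfl

theorem conjTranspose_map_star_kronecker_mul (A B : Matrix n n R) :
    (A.map star ⊗ₖ A)ᴴ * (B.map star ⊗ₖ B) = (Aᴴ * B).map star ⊗ₖ (Aᴴ * B) := by
  rw [conjTranspose_kronecker, ← mul_kronecker_mul, map_star_mul]
  congr 2

theorem conjTranspose_mul_mul_conjTranspose_mul [DecidableEq ι] {K : ι → Matrix n n R}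
    {P : Matrix n n R} (hKK : ∀ i j, K i * (K j)ᴴ = if i = j then P else 0)
    (hPK : ∀ i, P * K i = K i) (i j k l : ι) :
    (K i)ᴴ * K j * ((K k)ᴴ * K l) = if j = k then (K i)ᴴ * K l else 0 := by
  rw [mul_assoc, ← mul_assoc (K j), hKK]
  split_ifs <;> simp [hPK]

variable [Fintype ι]

def superoperator (K : ι → Matrix n n R) : Matrix (n × n) (n × n) R :=
  ∑ i, (K i).map star ⊗ₖ K i

theorem conjTranspose_superoperator_mul_self (K : ι → Matrix n n R) :
    (superoperator K)ᴴ * superoperator K =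
      ∑ i, ∑ j, ((K i)ᴴ * K j).map star ⊗ₖ ((K i)ᴴ * K j) := by
  simp only [superoperator, conjTranspose_sum, Finset.sum_mul_sum,
    conjTranspose_map_star_kronecker_mul]

theorem superoperator_gram_mul_self [DecidableEq ι] {K : ι → Matrix n n R} {P : Matrix n n R}
    (hKK : ∀ i j, K i * (K j)ᴴ = if i = j then P else 0) (hPK : ∀ i, P * K i = K i) :
    (superoperator K)ᴴ * superoperator K * ((superoperator K)ᴴ * superoperator K) =
      Fintype.card ι • ((superoperator K)ᴴ * superoperator K) := by
  rw [conjTranspose_superoperator_mul_self]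
  refine sum_sum_mul_self_of_mul_eq_ite _ fun i j k l => ?_
  rw [← mul_kronecker_mul, ← map_star_mul, conjTranspose_mul_mul_conjTranspose_mul hKK hPK]
  split_ifs <;> simp

theorem trace_superoperator_gram [DecidableEq ι] {K : ι → Matrix n n R} {P : Matrix n n R}
    (hKK : ∀ i j, K i * (K j)ᴴ = if i = j then P else 0) :
    ((superoperator K)ᴴ * superoperator K).trace = Fintype.card ι • (star P.trace * P.trace) := by
  have htr : ∀ i j, ((K i)ᴴ * K j).trace = if j = i then P.trace else 0 := by
    intro i j
    rw [trace_mul_comm, hKK]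
    split_ifs <;> simp
  simp [conjTranspose_superoperator_mul_self, trace_sum, trace_kronecker, trace_map_star, htr]

end Superoperator

theorem pX_mul_pX : pX * pX = 1 := by
  ext i j; fin_cases i <;> fin_cases j <;> simp [pX]

theorem pZ_mul_pZ : pZ * pZ = 1 := by
  ext i j; fin_cases i <;> fin_cases j <;> simp [pZ]

theorem pX_mul_pZ_mul_pX : pX * pZ * pX = -pZ := by
  ext i j; fin_cases i <;> fin_cases j <;> simp [pX, pZ]

theorem conjTranspose_pX : pXᴴ = pX := by
  ext i j; fin_cases i <;> fin_cases j <;> simp [pX]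

theorem conjTranspose_pZ : pZᴴ = pZ := by
  ext i j; fin_cases i <;> fin_cases j <;> simp [pZ]

theorem S₁_mul_S₁ : S₁ * S₁ = 1 := by
  simp [S₁, ← mul_kronecker_mul, pZ_mul_pZ]

theorem S₂_mul_S₂ : S₂ * S₂ = 1 := by
  simp [S₂, ← mul_kronecker_mul, pZ_mul_pZ]

theorem commute_S₁_S₂ : Commute S₁ S₂ := by
  simp [Commute, SemiconjBy, S₁, S₂, ← mul_kronecker_mul]

theorem conjTranspose_S₁ : S₁ᴴ = S₁ := by
  simp [S₁, conjTranspose_kronecker, conjTranspose_pZ]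

theorem conjTranspose_S₂ : S₂ᴴ = S₂ := by
  simp [S₂, conjTranspose_kronecker, conjTranspose_pZ]

theorem conjTranspose_recP (m : Fin 4) : (recP m)ᴴ = recP m := by
  fin_cases m <;> simp [recP, conjTranspose_kronecker, conjTranspose_pX]

theorem recP_mul_recP (m : Fin 4) : recP m * recP m = 1 := by
  fin_cases m <;> simp [recP, ← mul_kronecker_mul, pX_mul_pX]

theorem recP_mul_S₁_mul_recP (m : Fin 4) : recP m * S₁ * recP m = sgn m 0 • S₁ := by
  fin_cases m <;>
    simp [recP, S₁, sgn, ← mul_kronecker_mul, pX_mul_pX, pX_mul_pZ_mul_pX, neg_kronecker,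
      kronecker_neg]

theorem recP_mul_S₂_mul_recP (m : Fin 4) : recP m * S₂ * recP m = sgn m 1 • S₂ := by
  fin_cases m <;>
    simp [recP, S₂, sgn, ← mul_kronecker_mul, pX_mul_pX, pX_mul_pZ_mul_pX, neg_kronecker,
      kronecker_neg]

theorem trace_pZ : pZ.trace = 0 := by
  simp [pZ, trace_fin_two]

theorem Proj3_zero : Proj3 0 = (4 : ℂ)⁻¹ • ((1 + S₁) * (1 + S₂)) := by
  simp [Proj3, sgn]

theorem trace_Proj3_zero : (Proj3 0).trace = 2 := by
  have hS₁₂ : S₁ * S₂ = pZ ⊗ₖ (1 ⊗ₖ pZ) := by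
    simp [S₁, S₂, ← mul_kronecker_mul, pZ_mul_pZ]
  rw [Proj3_zero, mul_add, add_mul, add_mul, one_mul, mul_one, one_mul, hS₁₂]
  norm_num [S₁, S₂, trace_kronecker, trace_pZ]

theorem sgn_mul_self (m : Fin 4) (j : Fin 2) : sgn m j * sgn m j = 1 := by
  fin_cases m <;> fin_cases j <;> norm_num [sgn]

theorem star_sgn (m : Fin 4) (j : Fin 2) : star (sgn m j) = sgn m j := by
  fin_cases m <;> fin_cases j <;> norm_num [sgn]

theorem sgn_eq_sgn_iff (m p : Fin 4) : sgn m 0 = sgn p 0 ∧ sgn m 1 = sgn p 1 ↔ m = p := by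
  fin_cases m <;> fin_cases p <;> norm_num [sgn]

theorem conjTranspose_Proj3 (m : Fin 4) : (Proj3 m)ᴴ = Proj3 m := by
  simp only [Proj3, conjTranspose_smul, conjTranspose_mul, conjTranspose_add, conjTranspose_one,
    conjTranspose_S₁, conjTranspose_S₂, star_sgn, star_inv₀, star_ofNat,
    (commute_S₁_S₂.one_add_smul _ _).eq]

theorem Proj3_mul_Proj3 (m p : Fin 4) : Proj3 m * Proj3 p = if m = p then Proj3 m else 0 := by
  rw [Proj3, Proj3, smul_mul_smul_comm, (commute_S₁_S₂.one_add_smul _ _).symm.mul_mul_mul_comm,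
    one_add_smul_mul_one_add_smul S₁_mul_S₁ (sgn_mul_self m 0) (sgn_mul_self p 0),
    one_add_smul_mul_one_add_smul S₂_mul_S₂ (sgn_mul_self m 1) (sgn_mul_self p 1)]
  by_cases h : sgn m 0 = sgn p 0 ∧ sgn m 1 = sgn p 1
  · rw [if_pos h.1, if_pos h.2, if_pos ((sgn_eq_sgn_iff m p).mp h), smul_mul_smul_comm,
      smul_smul]
    norm_num
  · rw [if_neg (mt (sgn_eq_sgn_iff m p).mpr h)]
    rcases not_and_or.mp h with h | h <;> simp [h]

theorem recP_mul_Proj3_zero_mul_recP (m : Fin 4) : recP m * Proj3 0 * recP m = Proj3 m := by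
  have hconj : ∀ (S : Matrix (Fin 2 × Fin 2 × Fin 2) (Fin 2 × Fin 2 × Fin 2) ℂ),
      recP m * (1 + S) * recP m = 1 + recP m * S * recP m := fun S => by
    rw [mul_add, add_mul, mul_one, recP_mul_recP]
  rw [Proj3_zero, Proj3, mul_smul_comm, smul_mul_assoc,
    mul_mul_mul_eq_of_mul_self_eq_one (recP_mul_recP m), hconj, hconj, recP_mul_S₁_mul_recP,
    recP_mul_S₂_mul_recP]

theorem recP_mul_Proj3_mul_recP (m : Fin 4) : recP m * Proj3 m * recP m = Proj3 0 := by
  rw [← recP_mul_Proj3_zero_mul_recP m]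
  simp only [← mul_assoc, recP_mul_recP, one_mul]
  rw [mul_assoc, recP_mul_recP, mul_one]

theorem Proj3_zero_mul_recP (m : Fin 4) : Proj3 0 * recP m = recP m * Proj3 m := by
  rw [← recP_mul_Proj3_zero_mul_recP m]
  simp only [← mul_assoc, recP_mul_recP, one_mul]

theorem kraus3_mul_conjTranspose (m p : Fin 4) :
    kraus3 m * (kraus3 p)ᴴ = if m = p then Proj3 0 else 0 := by
  rw [kraus3, kraus3, conjTranspose_mul, conjTranspose_Proj3, conjTranspose_recP,
    mul_assoc, ← mul_assoc (Proj3 m), Proj3_mul_Proj3]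
  split_ifs with h
  · rw [h, ← mul_assoc, recP_mul_Proj3_mul_recP]
  · simp

theorem Proj3_zero_mul_kraus3 (m : Fin 4) : Proj3 0 * kraus3 m = kraus3 m := by
  rw [kraus3, ← mul_assoc, Proj3_zero_mul_recP, mul_assoc, Proj3_mul_Proj3, if_pos rfl]

/-- The superoperator `Σ_m A_m* ⊗ A_m` of the perfect error-correcting channel of the
three-qubit bit-flip code has singular values `2` with multiplicity `4` and `0` with
multiplicity `60`. -/
theorem bitflip_code_singular_values :
    singularValues (∑ m : Fin 4, (kraus3 m).map star ⊗ₖ kraus3 m) =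
      Multiset.replicate 4 2 + Multiset.replicate 60 0 := by
  have hroots : ((superoperator kraus3)ᴴ * superoperator kraus3).charpoly.roots =
      Multiset.replicate 4 4 + Multiset.replicate 60 0 := by
    refine charpoly_roots_eq_of_mul_self_eq_smul (k := 4) (by norm_num) ?_ ?_
    · simpa only [Fintype.card_fin, ← Nat.cast_smul_eq_nsmul ℂ, Nat.cast_ofNat] using
        superoperator_gram_mul_self kraus3_mul_conjTranspose Proj3_zero_mul_kraus3
    · rw [trace_superoperator_gram kraus3_mul_conjTranspose, trace_Proj3_zero]
      norm_num
  have hsqrt : Real.sqrt (4 : ℂ).re = 2 := by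
    rw [show (4 : ℂ).re = 2 ^ 2 by norm_num, Real.sqrt_sq zero_le_two]
  rw [singularValues, show ∑ m : Fin 4, (kraus3 m).map star ⊗ₖ kraus3 m = superoperator kraus3
    from rfl, hroots, Multiset.map_add, Multiset.map_replicate, Multiset.map_replicate, hsqrt,
    Complex.zero_re, Real.sqrt_zero]
end
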